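/- arXiv:1005.4382 — 2 statements merged into one kernel-verified Lean document; each statement's English description precedes it below -/
import Mathlib

section
/- Let ψ : D_r ⊂ ℝ^m → ℝ^n be a C² function on the disc of radius r, and let II denote the second fundamental form of the graph of ψ with components h_{ijα} = ∂²ψ_α/∂x_i∂x_j, with norm |II|²_g = h_{ijα} h_{klβ} g^{αβ} g^{ik} g^{jl} taken in the induced metrics g_{ij} = δ_{ij} + D_iψ·D_jψ and g_{αβ} = δ_{αβ} + Dψ_α·Dψ_β. Then |D²ψ|² ≤ (1 + |Dψ|²)³ |II|²_g, where |D²ψ|² = Σ_{α,i,j} (∂²ψ_α/∂x_i∂x_j)². -/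
/-!
With `P = Dψ`, the induced metric is `1 + P Pᵀ` and the normal metric is `1 + Pᵀ P`; by
Cauchy–Schwarz both lie below `λ • 1` in the Loewner order, where `λ = 1 + |P|²`, so both inverses
lie above `λ⁻¹ • 1`. Flattening `h_{ijα}` to a vector, `|II|²_g` is its quadratic form for the
Kronecker product `g⁻¹ ⊗ g⁻¹ ⊗ g_N⁻¹`. Kronecker products are monotone on positive semidefinite
matrices, so this product dominates `λ⁻³ • 1`, which gives `λ⁻³ |D²ψ|² ≤ |II|²_g`.
-/

/-- First partial derivatives `∂ψ_α/∂x_i`. -/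
noncomputable def gradEntry {m n : ℕ} (ψ : EuclideanSpace ℝ (Fin m) → (Fin n → ℝ))
    (x : EuclideanSpace ℝ (Fin m)) (i : Fin m) (α : Fin n) : ℝ :=
  fderiv ℝ ψ x (EuclideanSpace.single i 1) α

/-- Second partial derivatives `h_{ijα} = ∂²ψ_α/∂x_i∂x_j`, the components of the second
fundamental form of the graph of `ψ`. -/
noncomputable def hessEntry {m n : ℕ} (ψ : EuclideanSpace ℝ (Fin m) → (Fin n → ℝ))
    (x : EuclideanSpace ℝ (Fin m)) (i j : Fin m) (α : Fin n) : ℝ :=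
  fderiv ℝ (fun y => fderiv ℝ ψ y (EuclideanSpace.single j 1) α) x (EuclideanSpace.single i 1)

/-- The induced metric `g_{ij} = δ_{ij} + D_iψ · D_jψ` on the graph. -/
noncomputable def graphMetric {m n : ℕ} (ψ : EuclideanSpace ℝ (Fin m) → (Fin n → ℝ))
    (x : EuclideanSpace ℝ (Fin m)) : Matrix (Fin m) (Fin m) ℝ :=
  Matrix.of fun i j => (if i = j then (1:ℝ) else 0) + ∑ α, gradEntry ψ x i α * gradEntry ψ x j α

/-- The normal bundle metric `g_{αβ} = δ_{αβ} + Dψ_α · Dψ_β`. -/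
noncomputable def normalMetric {m n : ℕ} (ψ : EuclideanSpace ℝ (Fin m) → (Fin n → ℝ))
    (x : EuclideanSpace ℝ (Fin m)) : Matrix (Fin n) (Fin n) ℝ :=
  Matrix.of fun α β => (if α = β then (1:ℝ) else 0) + ∑ i, gradEntry ψ x i α * gradEntry ψ x i β

/-- `|II|²_g = h_{ijα} h_{klβ} g^{αβ} g^{ik} g^{jl}`, the squared norm of the second
fundamental form of the graph of `ψ`, taken in the induced metrics. -/
noncomputable def sffNormSq {m n : ℕ} (ψ : EuclideanSpace ℝ (Fin m) → (Fin n → ℝ))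
    (x : EuclideanSpace ℝ (Fin m)) : ℝ :=
  ∑ i, ∑ j, ∑ k, ∑ l, ∑ α, ∑ β,
    hessEntry ψ x i j α * hessEntry ψ x k l β *
      (normalMetric ψ x)⁻¹ α β * (graphMetric ψ x)⁻¹ i k * (graphMetric ψ x)⁻¹ j l

open Finset Matrix
open scoped MatrixOrder Kronecker ComplexOrder

namespace Matrix

variable {ι κ : Type*} [Fintype ι] [Fintype κ]

section RCLike

variable {𝕜 : Type*} [RCLike 𝕜]

theorem kronecker_le_kronecker_left {A A' : Matrix ι ι 𝕜} {B : Matrix κ κ 𝕜}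
    (hA : A ≤ A') (hB : 0 ≤ B) : A ⊗ₖ B ≤ A' ⊗ₖ B := by
  have hsub : A' ⊗ₖ B - A ⊗ₖ B = (A' - A) ⊗ₖ B := by
    ext ⟨i, j⟩ ⟨k, l⟩
    simp [sub_mul]
  rw [le_iff, hsub]
  exact (le_iff.mp hA).kronecker hB.posSemidef

theorem kronecker_le_kronecker_right {A : Matrix ι ι 𝕜} {B B' : Matrix κ κ 𝕜}
    (hA : 0 ≤ A) (hB : B ≤ B') : A ⊗ₖ B ≤ A ⊗ₖ B' := by
  have hsub : A ⊗ₖ B' - A ⊗ₖ B = A ⊗ₖ (B' - B) := by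
    ext ⟨i, j⟩ ⟨k, l⟩
    simp [mul_sub]
  rw [le_iff, hsub]
  exact hA.posSemidef.kronecker (le_iff.mp hB)

theorem kronecker_le_kronecker {A A' : Matrix ι ι 𝕜} {B B' : Matrix κ κ 𝕜}
    (hA : 0 ≤ A) (hAA' : A ≤ A') (hB : 0 ≤ B) (hBB' : B ≤ B') : A ⊗ₖ B ≤ A' ⊗ₖ B' :=
  (kronecker_le_kronecker_left hAA' hB).trans (kronecker_le_kronecker_right (hA.trans hAA') hBB')

theorem dotProduct_mulVec_le_of_le {A B : Matrix ι ι 𝕜} (h : A ≤ B) (v : ι → 𝕜) :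
    star v ⬝ᵥ A *ᵥ v ≤ star v ⬝ᵥ B *ᵥ v := by
  have := (le_iff.mp h).dotProduct_mulVec_nonneg v
  rwa [sub_mulVec, dotProduct_sub, sub_nonneg] at this

-- `A⁻¹ - c⁻¹ • 1 = c⁻¹ • A⁻¹ * (c • 1 - A)` is a product of commuting positive matrices.
theorem smul_one_le_inv [DecidableEq ι] {A : Matrix ι ι 𝕜} (hA : A.PosDef) {c : ℝ} (hc : 0 < c)
    (hAc : A ≤ c • 1) : c⁻¹ • 1 ≤ A⁻¹ := by
  have hdet : IsUnit A.det := (isUnit_iff_isUnit_det A).mp hA.isUnit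
  have hcomm : Commute A⁻¹ (c • 1 - A) :=
    ((Commute.one_right _).smul_right c).sub_right
      ((nonsing_inv_mul A hdet).trans (mul_nonsing_inv A hdet).symm)
  have key : A⁻¹ - c⁻¹ • 1 = c⁻¹ • (A⁻¹ * (c • 1 - A)) := by
    rw [mul_sub, mul_smul_comm, mul_one, nonsing_inv_mul A hdet, smul_sub, inv_smul_smul₀ hc.ne']
  rw [le_iff, key]
  exact (smul_nonneg (inv_nonneg.mpr hc.le)
    (hcomm.mul_nonneg hA.inv.posSemidef.nonneg (sub_nonneg.mpr hAc))).posSemidef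

end RCLike

theorem conjTranspose_mul_self_le_smul_one [DecidableEq ι] (Q : Matrix κ ι ℝ) :
    Qᴴ * Q ≤ (∑ a, ∑ b, Q a b ^ 2) • 1 := by
  rw [le_iff]
  refine PosSemidef.of_dotProduct_mulVec_nonneg
    ((isHermitian_one.smul (IsSelfAdjoint.all _)).sub (isHermitian_conjTranspose_mul_self Q))
    fun x => ?_
  have hrow : ∀ a, (Q *ᵥ x) a ^ 2 ≤ (∑ b, Q a b ^ 2) * ∑ b, x b ^ 2 := fun a =>
    sum_mul_sq_le_sq_mul_sq univ (Q a) x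
  have hnorm : (Q *ᵥ x) ⬝ᵥ (Q *ᵥ x) ≤ (∑ a, ∑ b, Q a b ^ 2) * (x ⬝ᵥ x) := by
    simpa only [dotProduct, ← sq, sum_mul] using sum_le_sum fun a _ => hrow a
  rwa [star_trivial, sub_mulVec, dotProduct_sub, smul_mulVec, one_mulVec, dotProduct_smul,
    smul_eq_mul, ← mulVec_mulVec, dotProduct_mulVec, vecMul_conjTranspose, star_trivial, sub_nonneg]

theorem sum_contract_eq_dotProduct_kronecker {R : Type*} [CommSemiring R]
    (h : ι → ι → κ → R) (A B : Matrix ι ι R) (C : Matrix κ κ R) :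
    ∑ i, ∑ j, ∑ k, ∑ l, ∑ α, ∑ β, h i j α * h k l β * C α β * A i k * B j l =
      Function.uncurry (Function.uncurry h) ⬝ᵥ
        (A ⊗ₖ B ⊗ₖ C) *ᵥ Function.uncurry (Function.uncurry h) := by
  simp only [dotProduct, mulVec, Fintype.sum_prod_type, mul_sum, kroneckerMap_apply,
    Function.uncurry_apply_pair]
  refine sum_congr rfl fun i _ => sum_congr rfl fun j _ => ?_
  symm
  rw [sum_comm]
  refine sum_congr rfl fun k _ => ?_
  rw [sum_comm]
  exact sum_congr rfl fun l _ => sum_congr rfl fun α _ => sum_congr rfl fun β _ => by ring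

variable [DecidableEq ι]

theorem smul_one_le_inv_one_add_conjTranspose_mul (P : Matrix κ ι ℝ) :
    (1 + ∑ a, ∑ b, P a b ^ 2)⁻¹ • 1 ≤ (1 + Pᴴ * P)⁻¹ := by
  refine smul_one_le_inv (PosDef.one.add_posSemidef (posSemidef_conjTranspose_mul_self P))
    (by positivity) ?_
  rw [add_smul, one_smul]
  exact add_le_add_right (conjTranspose_mul_self_le_smul_one P) 1

theorem smul_one_le_inv_one_add_mul_conjTranspose (P : Matrix ι κ ℝ) :
    (1 + ∑ a, ∑ b, P a b ^ 2)⁻¹ • 1 ≤ (1 + P * Pᴴ)⁻¹ := by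
  simpa [sum_comm (γ := κ)] using smul_one_le_inv_one_add_conjTranspose_mul Pᴴ

theorem sum_sq_le_mul_contract_inv_one_add [DecidableEq κ] (P : Matrix ι κ ℝ)
    (h : ι → ι → κ → ℝ) :
    ∑ α, ∑ i, ∑ j, h i j α ^ 2 ≤ (1 + ∑ i, ∑ α, P i α ^ 2) ^ 3 *
      ∑ i, ∑ j, ∑ k, ∑ l, ∑ α, ∑ β,
        h i j α * h k l β * (1 + Pᴴ * P : Matrix κ κ ℝ)⁻¹ α β *
          (1 + P * Pᴴ : Matrix ι ι ℝ)⁻¹ i k * (1 + P * Pᴴ : Matrix ι ι ℝ)⁻¹ j l := by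
  set c : ℝ := 1 + ∑ i, ∑ α, P i α ^ 2
  set v := Function.uncurry (Function.uncurry h)
  have hc : 0 < c := by positivity
  have hcι : (0 : Matrix ι ι ℝ) ≤ c⁻¹ • 1 :=
    smul_nonneg (inv_nonneg.mpr hc.le) PosSemidef.one.nonneg
  have hcκ : (0 : Matrix κ κ ℝ) ≤ c⁻¹ • 1 :=
    smul_nonneg (inv_nonneg.mpr hc.le) PosSemidef.one.nonneg
  have hgc := smul_one_le_inv_one_add_mul_conjTranspose P
  have hnc := smul_one_le_inv_one_add_conjTranspose_mul P
  have hK := dotProduct_mulVec_le_of_le (kronecker_le_kronecker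
    (hcι.posSemidef.kronecker hcι.posSemidef).nonneg (kronecker_le_kronecker hcι hgc hcι hgc)
    hcκ hnc) v
  have hsq : v ⬝ᵥ v = ∑ α, ∑ i, ∑ j, h i j α ^ 2 := by
    simp only [v, dotProduct, Fintype.sum_prod_type, Function.uncurry_apply_pair, ← sq]
    symm
    rw [sum_comm]
    exact sum_congr rfl fun i _ => sum_comm
  simp only [star_trivial, smul_kronecker, kronecker_smul, one_kronecker_one, smul_smul,
    smul_mulVec, one_mulVec, dotProduct_smul, smul_eq_mul, hsq] at hK
  rw [sum_contract_eq_dotProduct_kronecker]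
  calc ∑ α, ∑ i, ∑ j, h i j α ^ 2
      = c ^ 3 * (c⁻¹ * (c⁻¹ * c⁻¹) * ∑ α, ∑ i, ∑ j, h i j α ^ 2) := by
        field_simp
    _ ≤ _ := by gcongr

end Matrix

theorem hessian_le_sff_norm_general {m n : ℕ}
    (ψ : EuclideanSpace ℝ (Fin m) → (Fin n → ℝ))
    (x : EuclideanSpace ℝ (Fin m)) :
    ∑ α, ∑ i, ∑ j, (hessEntry ψ x i j α) ^ 2 ≤
      (1 + ∑ i, ∑ α, (gradEntry ψ x i α) ^ 2) ^ 3 * sffNormSq ψ x := by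
  set P : Matrix (Fin m) (Fin n) ℝ := Matrix.of (gradEntry ψ x)
  have hg : graphMetric ψ x = 1 + P * Pᴴ := by
    ext i j
    simp [graphMetric, P, one_apply, mul_apply]
  have hn : normalMetric ψ x = 1 + Pᴴ * P := by
    ext α β
    simp [normalMetric, P, one_apply, mul_apply]
  rw [sffNormSq, hg, hn]
  exact sum_sq_le_mul_contract_inv_one_add P (hessEntry ψ x)

/-- For a `C²` function `ψ : D_r ⊆ ℝᵐ → ℝⁿ`,
`|D²ψ|² ≤ (1 + |Dψ|²)³ |II|²_g`, where `II` is the second fundamental form of the graph of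
`ψ` with components `h_{ijα} = ∂²ψ_α/∂x_i∂x_j`, and `|D²ψ|² = ∑_{α,i,j} (∂²ψ_α/∂x_i∂x_j)²`. -/
theorem hessian_le_sff_norm {m n : ℕ} (r : ℝ)
    (ψ : EuclideanSpace ℝ (Fin m) → (Fin n → ℝ)) (hψ : ContDiff ℝ 2 ψ)
    (x : EuclideanSpace ℝ (Fin m)) (hx : x ∈ Metric.ball (0 : EuclideanSpace ℝ (Fin m)) r) :
    ∑ α, ∑ i, ∑ j, (hessEntry ψ x i j α) ^ 2 ≤
      (1 + ∑ i, ∑ α, (gradEntry ψ x i α) ^ 2) ^ 3 * sffNormSq ψ x :=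
  hessian_le_sff_norm_general ψ x
end

section
/- Suppose the metrics g(t), t ∈ [0,T), on a compact manifold satisfy |∂g/∂t|_{g(t)} ≤ 2C (T-t)^{-1/p} for some p ∈ (1,2] and constant C. Then the g(t) are uniformly equivalent, and there is a constant C' such that for all 0 ≤ t₀ ≤ t₁ < T, |g(t₁) - g(t₀)|_{g(0)} ≤ C' ((T-t₀)^{1-1/p} - (T-t₁)^{1-1/p}); in particular t ↦ g(t) is uniformly continuous on [0,T) in the g(0)-norm. -/
open Matrix

/-- The tensor norm `|A|_g = √(g^{ik} g^{jl} A_{ij} A_{kl}) = √(tr(g⁻¹ A g⁻¹ A))` of a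
symmetric 2-tensor `A` with respect to a metric `g`, in local components. -/
noncomputable def tensorNorm {k : ℕ} (g A : Matrix (Fin k) (Fin k) ℝ) : ℝ :=
  Real.sqrt ((g⁻¹ * A * g⁻¹ * A).trace)

/-!
Everything happens at a fixed point of `M`, with constants that do not depend on it. Writing a
metric as `g = S²` with `S` symmetric, `|A|_g` is the Frobenius norm of `S⁻¹ A S⁻¹`, so
Cauchy–Schwarz gives `|tr(g⁻¹ A g⁻¹ B)| ≤ |A|_g |B|_g` and, testing against `(g v)(g v)ᵀ`,
`|vᵀ A v| ≤ |A|_g vᵀ g v`.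

The latter bounds the derivative of `log (vᵀ g(t) v)` by `2C (T-t)^{-1/p}`, whose antiderivative
`-(T-t)^{1-1/p} / (1-1/p)` is bounded because `p > 1`; this is the uniform equivalence
`K⁻¹ g(0) ≤ g(t) ≤ K g(0)`, and it yields `|·|_{g(0)} ≤ k K |·|_{g(t)}`. For `Δ = g(t₁) - g(t₀)`,
the function `s ↦ tr(g(0)⁻¹ Δ g(0)⁻¹ g(s))` increases by `|Δ|²_{g(0)}` between `t₀` and `t₁`, while
its derivative is at most `|Δ|_{g(0)} k K 2C (T-s)^{-1/p}`; integrating gives the Hölder bound, and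
uniform continuity follows from `b^q - a^q ≤ (b - a)^q` for `q ≤ 1`.
-/

open Set

lemma Matrix.PosDef.isSymm {n : Type*} {g : Matrix n n ℝ} (hg : g.PosDef) : g.IsSymm :=
  isHermitian_iff_isSymm.1 hg.isHermitian

section TraceInequalities

open scoped Matrix.Norms.Frobenius

variable {m n : Type*} [Fintype m] [Fintype n]

lemma Matrix.frobenius_norm_sq_eq_trace (X : Matrix m n ℝ) : ‖X‖ ^ 2 = (Xᵀ * X).trace := by
  rw [frobenius_norm_def, ← Real.rpow_natCast, ← Real.rpow_mul (by positivity), Finset.sum_comm]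
  simp [trace, mul_apply, sq]

lemma Matrix.abs_trace_transpose_mul_le (X Y : Matrix m n ℝ) :
    |(Xᵀ * Y).trace| ≤ ‖X‖ * ‖Y‖ := by
  refine abs_le_of_sq_le_sq ?_ (by positivity)
  rw [mul_pow, frobenius_norm_sq_eq_trace, frobenius_norm_sq_eq_trace]
  simp only [trace, diag, mul_apply, transpose_apply, ← Fintype.sum_prod_type']
  simpa only [sq] using Finset.sum_mul_sq_le_sq_mul_sq _ _ _

lemma Matrix.trace_transpose_mul_mul_le {g g₀ : Matrix n n ℝ} {K : ℝ}
    (h : ∀ v, v ⬝ᵥ g *ᵥ v ≤ K * (v ⬝ᵥ g₀ *ᵥ v)) (P : Matrix n n ℝ) :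
    (Pᵀ * g * P).trace ≤ K * (Pᵀ * g₀ * P).trace := by
  simp only [trace, diag, Finset.mul_sum]
  exact Finset.sum_le_sum fun j _ => by rw [mul_mul_apply, mul_mul_apply]; exact h _

end TraceInequalities

section Frame

variable {n : Type*} [Fintype n] [DecidableEq n]

open scoped MatrixOrder Matrix.Norms.L2Operator in
lemma Matrix.PosDef.exists_isSymm_isUnit_mul_self_eq {g : Matrix n n ℝ} (hg : g.PosDef) :
    ∃ S : Matrix n n ℝ, S.IsSymm ∧ IsUnit S ∧ S * S = g :=
  ⟨CFC.sqrt g, isHermitian_iff_isSymm.1 (CFC.sqrt_nonneg g).posSemidef.isHermitian,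
    (CFC.isUnit_sqrt_iff g hg.posSemidef.nonneg).2 hg.isUnit,
    CFC.sqrt_mul_sqrt_self g hg.posSemidef.nonneg⟩

lemma Matrix.IsSymm.inv_mul_mul_inv {S A : Matrix n n ℝ} (hS : S.IsSymm) (hA : A.IsSymm) :
    (S⁻¹ * A * S⁻¹).IsSymm := by
  simp only [IsSymm, transpose_mul, transpose_nonsing_inv, hS.eq, hA.eq, Matrix.mul_assoc]

lemma Matrix.trace_inv_mul_inv_mul_of_mul_self_eq {S g : Matrix n n ℝ} (hSg : S * S = g)
    (A B : Matrix n n ℝ) :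
    (g⁻¹ * A * g⁻¹ * B).trace = (S⁻¹ * A * S⁻¹ * (S⁻¹ * B * S⁻¹)).trace := by
  subst hSg
  simp only [mul_inv_rev, Matrix.mul_assoc]
  rw [trace_mul_comm S⁻¹]
  simp only [Matrix.mul_assoc]

end Frame

section TensorNorm

open scoped Matrix.Norms.Frobenius

variable {k : ℕ} {g A : Matrix (Fin k) (Fin k) ℝ}

lemma tensorNorm_nonneg (g A : Matrix (Fin k) (Fin k) ℝ) : 0 ≤ tensorNorm g A :=
  Real.sqrt_nonneg _

lemma tensorNorm_eq_frobenius_norm {S : Matrix (Fin k) (Fin k) ℝ} (hS : S.IsSymm)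
    (hSg : S * S = g) (hA : A.IsSymm) : tensorNorm g A = ‖S⁻¹ * A * S⁻¹‖ := by
  rw [tensorNorm, trace_inv_mul_inv_mul_of_mul_self_eq hSg]
  nth_rewrite 1 [← (hS.inv_mul_mul_inv hA).eq]
  rw [← frobenius_norm_sq_eq_trace, Real.sqrt_sq (norm_nonneg _)]

lemma sq_tensorNorm (hg : g.PosDef) (hA : A.IsSymm) :
    tensorNorm g A ^ 2 = (g⁻¹ * A * g⁻¹ * A).trace := by
  obtain ⟨S, hS, -, hSg⟩ := hg.exists_isSymm_isUnit_mul_self_eq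
  rw [tensorNorm_eq_frobenius_norm hS hSg hA, frobenius_norm_sq_eq_trace,
    (hS.inv_mul_mul_inv hA).eq, trace_inv_mul_inv_mul_of_mul_self_eq hSg]

lemma abs_trace_inv_mul_le_tensorNorm_mul {B : Matrix (Fin k) (Fin k) ℝ} (hg : g.PosDef)
    (hA : A.IsSymm) (hB : B.IsSymm) :
    |(g⁻¹ * A * g⁻¹ * B).trace| ≤ tensorNorm g A * tensorNorm g B := by
  obtain ⟨S, hS, -, hSg⟩ := hg.exists_isSymm_isUnit_mul_self_eq
  have h := abs_trace_transpose_mul_le (S⁻¹ * A * S⁻¹) (S⁻¹ * B * S⁻¹)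
  rwa [(hS.inv_mul_mul_inv hA).eq, ← trace_inv_mul_inv_mul_of_mul_self_eq hSg,
    ← tensorNorm_eq_frobenius_norm hS hSg hA, ← tensorNorm_eq_frobenius_norm hS hSg hB] at h

lemma abs_dotProduct_mulVec_le_tensorNorm_mul (hg : g.PosDef) (hA : A.IsSymm)
    (v : Fin k → ℝ) : |v ⬝ᵥ A *ᵥ v| ≤ tensorNorm g A * (v ⬝ᵥ g *ᵥ v) := by
  have hdet := (isUnit_iff_isUnit_det g).1 hg.isUnit
  have key : ∀ B, (g⁻¹ * B * g⁻¹ * vecMulVec (g *ᵥ v) (g *ᵥ v)).trace = v ⬝ᵥ B *ᵥ v := by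
    intro B
    rw [mul_vecMulVec, trace_vecMulVec, dotProduct_mulVec, ← mulVec_transpose, hg.isSymm.eq,
      mulVec_mulVec, mulVec_mulVec, dotProduct_comm]
    simp only [← Matrix.mul_assoc, mul_nonsing_inv _ hdet, Matrix.one_mul]
    simp only [Matrix.mul_assoc, nonsing_inv_mul _ hdet, Matrix.mul_one]
  have hP : (vecMulVec (g *ᵥ v) (g *ᵥ v)).IsSymm := transpose_vecMulVec _ _
  have hnorm : tensorNorm g (vecMulVec (g *ᵥ v) (g *ᵥ v)) = v ⬝ᵥ g *ᵥ v := by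
    rw [tensorNorm, key, vecMulVec_mulVec]
    simp only [dotProduct_comm (g *ᵥ v) v, op_smul_eq_smul, dotProduct_smul, smul_eq_mul]
    exact Real.sqrt_mul_self (by simpa using hg.posSemidef.dotProduct_mulVec_nonneg v)
  rw [← key A, ← hnorm]
  exact abs_trace_inv_mul_le_tensorNorm_mul hg hA hP

lemma tensorNorm_le_mul_tensorNorm_of_dotProduct_mulVec_le {g₀ : Matrix (Fin k) (Fin k) ℝ}
    {K : ℝ} (hg : g.PosDef) (hg₀ : g₀.PosDef) (h : ∀ v, v ⬝ᵥ g *ᵥ v ≤ K * (v ⬝ᵥ g₀ *ᵥ v))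
    (hA : A.IsSymm) : tensorNorm g₀ A ≤ k * K * tensorNorm g A := by
  obtain ⟨S, hS, hSu, hSg⟩ := hg.exists_isSymm_isUnit_mul_self_eq
  obtain ⟨S₀, hS₀, hS₀u, hS₀g⟩ := hg₀.exists_isSymm_isUnit_mul_self_eq
  rw [isUnit_iff_isUnit_det] at hSu hS₀u
  have hS₀inv : (S₀⁻¹)ᵀ = S₀⁻¹ := by rw [transpose_nonsing_inv, hS₀.eq]
  set M := S * S₀⁻¹
  have hMt : Mᵀ = S₀⁻¹ * S := by rw [transpose_mul, hS₀inv, hS.eq]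
  have hconj : S₀⁻¹ * A * S₀⁻¹ = Mᵀ * (S⁻¹ * A * S⁻¹) * M := by
    simp only [hMt, M, Matrix.mul_assoc, mul_nonsing_inv_cancel_left _ _ hSu,
      nonsing_inv_mul_cancel_left _ _ hSu]
  have hM : ‖M‖ ^ 2 ≤ k * K := by
    calc ‖M‖ ^ 2 = ((S₀⁻¹)ᵀ * g * S₀⁻¹).trace := by
          rw [frobenius_norm_sq_eq_trace, hMt, hS₀inv, ← hSg]
          simp only [M, Matrix.mul_assoc]
      _ ≤ K * ((S₀⁻¹)ᵀ * g₀ * S₀⁻¹).trace := trace_transpose_mul_mul_le h _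
      _ = k * K := by
          rw [hS₀inv, ← hS₀g]
          simp only [mul_nonsing_inv _ hS₀u, nonsing_inv_mul_cancel_left _ _ hS₀u]
          simp [mul_comm]
  rw [tensorNorm_eq_frobenius_norm hS₀ hS₀g hA, tensorNorm_eq_frobenius_norm hS hSg hA, hconj]
  calc ‖Mᵀ * (S⁻¹ * A * S⁻¹) * M‖ ≤ ‖Mᵀ‖ * ‖S⁻¹ * A * S⁻¹‖ * ‖M‖ :=
        (frobenius_norm_mul _ _).trans (by gcongr; exact frobenius_norm_mul _ _)
    _ = ‖M‖ ^ 2 * ‖S⁻¹ * A * S⁻¹‖ := by rw [frobenius_norm_transpose]; ring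
    _ ≤ k * K * ‖S⁻¹ * A * S⁻¹‖ := by gcongr

end TensorNorm

lemma Matrix.isSymm_of_hasDerivAt {n : Type*} {G G' : ℝ → Matrix n n ℝ} {s : Set ℝ}
    (hs : UniqueDiffOn ℝ s) (hG : ∀ t ∈ s, (G t).IsSymm)
    (hG' : ∀ i j, ∀ t ∈ s, HasDerivAt (fun r => G r i j) (G' t i j) t) {t : ℝ} (ht : t ∈ s) :
    (G' t).IsSymm :=
  IsSymm.ext fun i j => (hs t ht).eq_deriv _
    ((hG' j i t ht).hasDerivWithinAt.congr (fun r hr => (hG r hr).apply j i) ((hG t ht).apply j i))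
    (hG' i j t ht).hasDerivWithinAt

lemma Matrix.hasDerivAt_trace_mul {n : Type*} [Fintype n] {G : ℝ → Matrix n n ℝ}
    {G' : Matrix n n ℝ} {t : ℝ} (P : Matrix n n ℝ)
    (h : ∀ i j, HasDerivAt (fun s => G s i j) (G' i j) t) :
    HasDerivAt (fun s => (P * G s).trace) ((P * G').trace) t := by
  simp only [trace, diag, mul_apply]
  exact HasDerivAt.fun_sum fun i _ => HasDerivAt.fun_sum fun j _ => (h j i).const_mul (P i j)

lemma sub_le_sub_of_hasDerivAt_le {u u' F F' : ℝ → ℝ} {a b : ℝ} (hab : a ≤ b)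
    (hu : ∀ t ∈ Icc a b, HasDerivAt u (u' t) t) (hF : ∀ t ∈ Icc a b, HasDerivAt F (F' t) t)
    (h : ∀ t ∈ Ioo a b, u' t ≤ F' t) : u b - u a ≤ F b - F a := by
  have hmono : MonotoneOn (fun t => F t - u t) (Icc a b) := by
    refine monotoneOn_of_hasDerivWithinAt_nonneg (f' := fun t => F' t - u' t) (convex_Icc a b)
      (fun t ht => ((hF t ht).sub (hu t ht)).continuousAt.continuousWithinAt) ?_ ?_
    all_goals rw [interior_Icc]
    · exact fun t ht =>
        ((hF t (Ioo_subset_Icc_self ht)).sub (hu t (Ioo_subset_Icc_self ht))).hasDerivWithinAt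
    · exact fun t ht => sub_nonneg.2 (h t ht)
  linarith [hmono (left_mem_Icc.2 hab) (right_mem_Icc.2 hab) hab]

lemma hasDerivAt_neg_rpow_one_sub_div {T r t : ℝ} (hr : r ≠ 1) (ht : t < T) :
    HasDerivAt (fun s => -(T - s) ^ (1 - r) / (1 - r)) ((T - t) ^ (-r)) t := by
  have h := ((hasDerivAt_id t).const_sub T).rpow_const (p := 1 - r) (Or.inl (sub_pos.2 ht).ne')
  refine (h.fun_neg.div_const (1 - r)).congr_deriv ?_
  rw [show 1 - r - 1 = -r by ring, id]
  field_simp [sub_ne_zero.2 hr.symm]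

lemma abs_sub_le_of_abs_deriv_le_rpow {u u' : ℝ → ℝ} {a b T r B : ℝ} (hr : r < 1) (hab : a ≤ b)
    (hbT : b < T) (hu : ∀ t ∈ Icc a b, HasDerivAt u (u' t) t)
    (hu' : ∀ t ∈ Icc a b, |u' t| ≤ B * (T - t) ^ (-r)) :
    |u b - u a| ≤ B / (1 - r) * ((T - a) ^ (1 - r) - (T - b) ^ (1 - r)) := by
  have hF : ∀ t ∈ Icc a b,
      HasDerivAt (fun s => B * (-(T - s) ^ (1 - r) / (1 - r))) (B * (T - t) ^ (-r)) t :=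
    fun t ht => (hasDerivAt_neg_rpow_one_sub_div hr.ne (ht.2.trans_lt hbT)).const_mul B
  have hup := sub_le_sub_of_hasDerivAt_le hab hu hF fun t ht =>
    (abs_le.1 (hu' t (Ioo_subset_Icc_self ht))).2
  have hlow := sub_le_sub_of_hasDerivAt_le hab (fun t ht => (hu t ht).neg) hF fun t ht =>
    neg_le.1 (abs_le.1 (hu' t (Ioo_subset_Icc_self ht))).1
  have hFab : B * (-(T - b) ^ (1 - r) / (1 - r)) - B * (-(T - a) ^ (1 - r) / (1 - r)) =
      B / (1 - r) * ((T - a) ^ (1 - r) - (T - b) ^ (1 - r)) := by ring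
  simp only [Pi.neg_apply] at hlow
  exact abs_sub_le_iff.2 ⟨by linarith, by linarith⟩

lemma inv_exp_mul_le_and_le_exp_mul_of_abs_log_sub_le {a b L : ℝ} (ha : 0 < a) (hb : 0 < b)
    (h : |Real.log a - Real.log b| ≤ L) : (Real.exp L)⁻¹ * b ≤ a ∧ a ≤ Real.exp L * b := by
  rw [abs_sub_le_iff] at h
  constructor
  · rw [inv_mul_le_iff₀ (Real.exp_pos L), ← Real.log_le_log_iff hb (by positivity),
      Real.log_mul (Real.exp_pos L).ne' ha.ne', Real.log_exp]
    linarith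
  · rw [← Real.log_le_log_iff ha (by positivity), Real.log_mul (Real.exp_pos L).ne' hb.ne',
      Real.log_exp]
    linarith

section Curve

variable {k : ℕ} {G G' : ℝ → Matrix (Fin k) (Fin k) ℝ} {T r B : ℝ}

lemma abs_log_dotProduct_mulVec_sub_le (hG : ∀ t ∈ Ico 0 T, (G t).PosDef)
    (hG' : ∀ i j, ∀ t ∈ Ico 0 T, HasDerivAt (fun s => G s i j) (G' t i j) t)
    (hbound : ∀ t ∈ Ico 0 T, tensorNorm (G t) (G' t) ≤ B * (T - t) ^ (-r))
    (hB : 0 ≤ B) (hr : r < 1) {t : ℝ} (ht : t ∈ Ico 0 T) {v : Fin k → ℝ} (hv : v ≠ 0) :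
    |Real.log (v ⬝ᵥ G t *ᵥ v) - Real.log (v ⬝ᵥ G 0 *ᵥ v)| ≤ B / (1 - r) * T ^ (1 - r) := by
  have hsub : Icc 0 t ⊆ Ico 0 T := Icc_subset_Ico_right ht.2
  have hpos : ∀ s ∈ Icc 0 t, 0 < v ⬝ᵥ G s *ᵥ v := fun s hs => by
    simpa using (hG s (hsub hs)).dotProduct_mulVec_pos hv
  have hQ : ∀ M : Matrix (Fin k) (Fin k) ℝ, v ⬝ᵥ M *ᵥ v = (vecMulVec v v * M).trace := fun M => by
    rw [vecMulVec_mul, trace_vecMulVec, dotProduct_mulVec, dotProduct_comm]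
  have hlog := abs_sub_le_of_abs_deriv_le_rpow (u := fun s => Real.log (v ⬝ᵥ G s *ᵥ v))
    hr ht.1 ht.2 (fun s hs => by
      simp only [hQ]
      exact ((hasDerivAt_trace_mul _ fun i j => hG' i j s (hsub hs)).log
        (hQ (G s) ▸ (hpos s hs).ne')))
    (fun s hs => by
      simp only [← hQ]
      rw [abs_div, abs_of_pos (hpos s hs), div_le_iff₀ (hpos s hs)]
      calc |v ⬝ᵥ G' s *ᵥ v| ≤ tensorNorm (G s) (G' s) * (v ⬝ᵥ G s *ᵥ v) :=
            abs_dotProduct_mulVec_le_tensorNorm_mul (hG s (hsub hs)) (isSymm_of_hasDerivAt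
              (uniqueDiffOn_Ico 0 T) (fun s hs => (hG s hs).isSymm) hG' (hsub hs)) v
        _ ≤ B * (T - s) ^ (-r) * (v ⬝ᵥ G s *ᵥ v) :=
            mul_le_mul_of_nonneg_right (hbound s (hsub hs)) (hpos s hs).le)
  rw [sub_zero] at hlog
  exact hlog.trans (mul_le_mul_of_nonneg_left (sub_le_self _ (Real.rpow_nonneg
    (sub_nonneg.2 ht.2.le) _)) (div_nonneg hB (sub_nonneg.2 hr.le)))

lemma dotProduct_mulVec_comparable_of_tensorNorm_deriv_le (hG : ∀ t ∈ Ico 0 T, (G t).PosDef)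
    (hG' : ∀ i j, ∀ t ∈ Ico 0 T, HasDerivAt (fun s => G s i j) (G' t i j) t)
    (hbound : ∀ t ∈ Ico 0 T, tensorNorm (G t) (G' t) ≤ B * (T - t) ^ (-r))
    (hB : 0 ≤ B) (hr : r < 1) {t : ℝ} (ht : t ∈ Ico 0 T) (v : Fin k → ℝ) :
    (Real.exp (B / (1 - r) * T ^ (1 - r)))⁻¹ * (v ⬝ᵥ G 0 *ᵥ v) ≤ v ⬝ᵥ G t *ᵥ v ∧
      v ⬝ᵥ G t *ᵥ v ≤ Real.exp (B / (1 - r) * T ^ (1 - r)) * (v ⬝ᵥ G 0 *ᵥ v) := by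
  rcases eq_or_ne v 0 with rfl | hv
  · simp
  have h0 : (0 : ℝ) ∈ Ico 0 T := ⟨le_rfl, ht.1.trans_lt ht.2⟩
  exact inv_exp_mul_le_and_le_exp_mul_of_abs_log_sub_le
    (by simpa using (hG t ht).dotProduct_mulVec_pos hv)
    (by simpa using (hG 0 h0).dotProduct_mulVec_pos hv)
    (abs_log_dotProduct_mulVec_sub_le hG hG' hbound hB hr ht hv)

lemma tensorNorm_sub_le_of_tensorNorm_deriv_le (hG : ∀ t ∈ Ico 0 T, (G t).PosDef)
    (hG' : ∀ i j, ∀ t ∈ Ico 0 T, HasDerivAt (fun s => G s i j) (G' t i j) t)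
    (hbound : ∀ t ∈ Ico 0 T, tensorNorm (G t) (G' t) ≤ B * (T - t) ^ (-r))
    (hB : 0 ≤ B) (hr : r < 1) {K : ℝ} (hK : 0 ≤ K)
    (hcomp : ∀ t ∈ Ico 0 T, ∀ v, v ⬝ᵥ G t *ᵥ v ≤ K * (v ⬝ᵥ G 0 *ᵥ v))
    {t₀ t₁ : ℝ} (ht₀ : 0 ≤ t₀) (h01 : t₀ ≤ t₁) (ht₁ : t₁ < T) :
    tensorNorm (G 0) (G t₁ - G t₀) ≤
      k * K * B / (1 - r) * ((T - t₀) ^ (1 - r) - (T - t₁) ^ (1 - r)) := by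
  have hsub : Icc t₀ t₁ ⊆ Ico 0 T := fun s hs => ⟨ht₀.trans hs.1, hs.2.trans_lt ht₁⟩
  have hg₀ : (G 0).PosDef := hG 0 ⟨le_rfl, ht₀.trans_lt (h01.trans_lt ht₁)⟩
  have hΔ : (G t₁ - G t₀).IsSymm :=
    (hG t₁ (hsub (right_mem_Icc.2 h01))).isSymm.sub (hG t₀ (hsub (left_mem_Icc.2 h01))).isSymm
  set N := tensorNorm (G 0) (G t₁ - G t₀)
  have hN0 : 0 ≤ N := tensorNorm_nonneg _ _
  have hφ := abs_sub_le_of_abs_deriv_le_rpow (B := N * (k * K * B))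
    (u := fun s => ((G 0)⁻¹ * (G t₁ - G t₀) * (G 0)⁻¹ * G s).trace) hr h01 ht₁
    (fun s hs => hasDerivAt_trace_mul _ fun i j => hG' i j s (hsub hs))
    (fun s hs => by
      have hG's : (G' s).IsSymm := isSymm_of_hasDerivAt (uniqueDiffOn_Ico 0 T)
        (fun s hs => (hG s hs).isSymm) hG' (hsub hs)
      calc _ ≤ N * tensorNorm (G 0) (G' s) := abs_trace_inv_mul_le_tensorNorm_mul hg₀ hΔ hG's
        _ ≤ N * (k * K * tensorNorm (G s) (G' s)) := mul_le_mul_of_nonneg_left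
            (tensorNorm_le_mul_tensorNorm_of_dotProduct_mulVec_le (hG s (hsub hs)) hg₀
              (hcomp s (hsub hs)) hG's) hN0
        _ ≤ N * (k * K * (B * (T - s) ^ (-r))) := by
            gcongr
            exact hbound s (hsub hs)
        _ = N * (k * K * B) * (T - s) ^ (-r) := by ring)
  have hsq : N * N ≤ N * (k * K * B / (1 - r) * ((T - t₀) ^ (1 - r) - (T - t₁) ^ (1 - r))) := by
    calc N * N = |((G 0)⁻¹ * (G t₁ - G t₀) * (G 0)⁻¹ * G t₁).trace -
          ((G 0)⁻¹ * (G t₁ - G t₀) * (G 0)⁻¹ * G t₀).trace| := by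
          rw [← trace_sub, ← Matrix.mul_sub, ← sq_tensorNorm hg₀ hΔ, abs_sq, sq]
      _ ≤ _ := hφ
      _ = _ := by ring
  rcases hN0.eq_or_lt with hN | hN
  · rw [← hN]
    refine mul_nonneg (div_nonneg (by positivity) (sub_nonneg.2 hr.le)) (sub_nonneg.2 ?_)
    exact Real.rpow_le_rpow (sub_nonneg.2 ht₁.le) (by linarith) (sub_nonneg.2 hr.le)
  · exact le_of_mul_le_mul_left hsq hN

end Curve

lemma exists_pos_forall_mul_rpow_sub_rpow_le {q c ε : ℝ} (hq0 : 0 < q) (hq1 : q ≤ 1)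
    (hc : 0 ≤ c) (hε : 0 < ε) :
    ∃ δ > 0, ∀ a b : ℝ, 0 ≤ a → a ≤ b → b - a ≤ δ → c * (b ^ q - a ^ q) ≤ ε := by
  refine ⟨(ε / (c + 1)) ^ q⁻¹, by positivity, fun a b ha hab hδ => ?_⟩
  have hsub : b ^ q - a ^ q ≤ (b - a) ^ q := by
    have := Real.rpow_add_le_add_rpow (sub_nonneg.2 hab) ha hq0.le hq1
    rw [sub_add_cancel] at this
    linarith
  have hpow : (b - a) ^ q ≤ ε / (c + 1) :=
    calc (b - a) ^ q ≤ ((ε / (c + 1)) ^ q⁻¹) ^ q := Real.rpow_le_rpow (sub_nonneg.2 hab) hδ hq0.le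
      _ = ε / (c + 1) := Real.rpow_inv_rpow (by positivity) hq0.ne'
  calc c * (b ^ q - a ^ q) ≤ (c + 1) * (ε / (c + 1)) :=
        mul_le_mul (by linarith) (hsub.trans hpow)
          (sub_nonneg.2 (Real.rpow_le_rpow ha hab hq0.le)) (by linarith)
    _ = ε := by field_simp

theorem metric_uniformly_continuous_of_typeI_bound_general {k : ℕ} {M : Type*}
    (T : ℝ) (hT : 0 < T) (p : ℝ)
    (hp1 : 1 < p) (C : ℝ) (hC : 0 ≤ C)
    (g g' : ℝ → M → Matrix (Fin k) (Fin k) ℝ)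
    (hpd : ∀ t ∈ Set.Ico (0:ℝ) T, ∀ x, (g t x).PosDef)
    (hderiv : ∀ (x : M) (i j : Fin k), ∀ t ∈ Set.Ico (0:ℝ) T,
      HasDerivAt (fun s => g s x i j) (g' t x i j) t)
    (hbound : ∀ t ∈ Set.Ico (0:ℝ) T, ∀ x,
      tensorNorm (g t x) (g' t x) ≤ 2 * C * (T - t) ^ (-(1 / p))) :
    (∃ K : ℝ, 1 ≤ K ∧ ∀ t ∈ Set.Ico (0:ℝ) T, ∀ (x : M) (v : Fin k → ℝ),
        K⁻¹ * (v ⬝ᵥ (g 0 x).mulVec v) ≤ v ⬝ᵥ (g t x).mulVec v ∧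
        v ⬝ᵥ (g t x).mulVec v ≤ K * (v ⬝ᵥ (g 0 x).mulVec v)) ∧
    (∃ C' : ℝ, 0 ≤ C' ∧ ∀ t₀ t₁ : ℝ, 0 ≤ t₀ → t₀ ≤ t₁ → t₁ < T → ∀ x : M,
        tensorNorm (g 0 x) (g t₁ x - g t₀ x) ≤
          C' * ((T - t₀) ^ (1 - 1 / p) - (T - t₁) ^ (1 - 1 / p))) ∧
    (∀ ε > (0:ℝ), ∃ δ > (0:ℝ), ∀ t₀ ∈ Set.Ico (0:ℝ) T, ∀ t₁ ∈ Set.Ico (0:ℝ) T,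
      t₀ ≤ t₁ → t₁ - t₀ ≤ δ → ∀ x : M,
        tensorNorm (g 0 x) (g t₁ x - g t₀ x) ≤ ε) := by
  have hr : 1 / p < 1 := (div_lt_one (by linarith)).2 hp1
  have hB : 0 ≤ 2 * C := by linarith
  set K := Real.exp (2 * C / (1 - 1 / p) * T ^ (1 - 1 / p))
  have hequiv := fun t (ht : t ∈ Ico 0 T) x =>
    dotProduct_mulVec_comparable_of_tensorNorm_deriv_le (fun s hs => hpd s hs x) (hderiv x)
      (fun s hs => hbound s hs x) hB hr ht
  have hC' : 0 ≤ k * K * (2 * C) / (1 - 1 / p) :=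
    div_nonneg (mul_nonneg (by positivity) hB) (sub_nonneg.2 hr.le)
  have hlip := fun t₀ t₁ (ht₀ : 0 ≤ t₀) (h01 : t₀ ≤ t₁) (ht₁ : t₁ < T) (x : M) =>
    tensorNorm_sub_le_of_tensorNorm_deriv_le (fun s hs => hpd s hs x) (hderiv x)
      (fun s hs => hbound s hs x) hB hr (Real.exp_pos _).le
      (fun s hs v => (hequiv s hs x v).2) ht₀ h01 ht₁
  refine ⟨⟨K, Real.one_le_exp (by positivity), hequiv⟩, ⟨_, hC', hlip⟩, fun ε hε => ?_⟩
  obtain ⟨δ, hδ, hδε⟩ := exists_pos_forall_mul_rpow_sub_rpow_le (sub_pos.2 hr)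
    (sub_le_self _ (by positivity)) hC' hε
  exact ⟨δ, hδ, fun t₀ ht₀ t₁ ht₁ h01 hδ' x => (hlip t₀ t₁ ht₀.1 h01 ht₁.2 x).trans
    (hδε _ _ (sub_nonneg.2 ht₁.2.le) (by linarith) (by linarith))⟩

/-- If the metrics `g(t)`, `t ∈ [0,T)`, on a compact manifold satisfy
`|∂g/∂t|_{g(t)} ≤ 2C (T-t)^{-1/p}` for some `p ∈ (1,2]`, then they are uniformly
equivalent, and `|g(t₁) - g(t₀)|_{g(0)} ≤ C'((T-t₀)^{1-1/p} - (T-t₁)^{1-1/p})` for some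
constant `C'`; in particular `t ↦ g(t)` is uniformly continuous on `[0,T)` in the
`g(0)`-norm. -/
theorem metric_uniformly_continuous_of_typeI_bound {k : ℕ} {M : Type*}
    [TopologicalSpace M] [CompactSpace M] (T : ℝ) (hT : 0 < T) (p : ℝ)
    (hp1 : 1 < p) (hp2 : p ≤ 2) (C : ℝ) (hC : 0 ≤ C)
    (g g' : ℝ → M → Matrix (Fin k) (Fin k) ℝ)
    (hsymm : ∀ t ∈ Set.Ico (0:ℝ) T, ∀ x, (g t x).IsSymm)
    (hpd : ∀ t ∈ Set.Ico (0:ℝ) T, ∀ x, (g t x).PosDef)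
    (hderiv : ∀ (x : M) (i j : Fin k), ∀ t ∈ Set.Ico (0:ℝ) T,
      HasDerivAt (fun s => g s x i j) (g' t x i j) t)
    (hbound : ∀ t ∈ Set.Ico (0:ℝ) T, ∀ x,
      tensorNorm (g t x) (g' t x) ≤ 2 * C * (T - t) ^ (-(1 / p))) :
    (∃ K : ℝ, 1 ≤ K ∧ ∀ t ∈ Set.Ico (0:ℝ) T, ∀ (x : M) (v : Fin k → ℝ),
        K⁻¹ * (v ⬝ᵥ (g 0 x).mulVec v) ≤ v ⬝ᵥ (g t x).mulVec v ∧
        v ⬝ᵥ (g t x).mulVec v ≤ K * (v ⬝ᵥ (g 0 x).mulVec v)) ∧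
    (∃ C' : ℝ, 0 ≤ C' ∧ ∀ t₀ t₁ : ℝ, 0 ≤ t₀ → t₀ ≤ t₁ → t₁ < T → ∀ x : M,
        tensorNorm (g 0 x) (g t₁ x - g t₀ x) ≤
          C' * ((T - t₀) ^ (1 - 1 / p) - (T - t₁) ^ (1 - 1 / p))) ∧
    (∀ ε > (0:ℝ), ∃ δ > (0:ℝ), ∀ t₀ ∈ Set.Ico (0:ℝ) T, ∀ t₁ ∈ Set.Ico (0:ℝ) T,
      t₀ ≤ t₁ → t₁ - t₀ ≤ δ → ∀ x : M,
        tensorNorm (g 0 x) (g t₁ x - g t₀ x) ≤ ε) :=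
  metric_uniformly_continuous_of_typeI_bound_general T hT p hp1 C hC g g' hpd hderiv hbound
end
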